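/- arXiv:2303.03024 — 2 statements merged into one kernel-verified Lean document; each statement's English description precedes it below -/
import Mathlib

section
/- Let U and V be finite sets with |U| ≤ |V|, and let w : U × V → ℝ be an edge-weight function. For each u ∈ U, let T(u) ⊆ V be a set of exactly |U| vertices such that every vertex in T(u) has edge weight to u at least as large as every vertex outside T(u) (i.e., for all v ∈ T(u) and v' ∈ V \ T(u), w(u,v) ≥ w(u,v')). Then there exists an injective map M : U → V that attains the maximum of ∑_{u∈U} w(u, M(u)) over all injective maps from U to V and additionally satisfies M(u) ∈ T(u) for every u ∈ U. -/
/-- **Theorem 2 of the paper.** In a complete weighted bipartite graph with parts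
`U` and `V` (`|U| ≤ |V|`), if for each `u` the candidate set `T u` consists of exactly
`|U|` vertices whose weights to `u` dominate all weights of vertices outside `T u`,
then there exists an optimal assignment (utility-maximizing injective map `U → V`)
that matches every `u` inside its candidate set `T u`. -/
theorem exists_optimal_assignment_in_candidates
    {U V : Type*} [Fintype U] [Fintype V] [DecidableEq V]
    (hUV : Fintype.card U ≤ Fintype.card V)
    (w : U → V → ℝ) (T : U → Finset V)
    (hTcard : ∀ u : U, (T u).card = Fintype.card U)
    (hTop : ∀ u : U, ∀ v ∈ T u, ∀ v' ∉ T u, w u v ≥ w u v') :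
    ∃ M : U → V, Function.Injective M ∧
      (∀ N : U → V, Function.Injective N →
        ∑ u, w u (N u) ≤ ∑ u, w u (M u)) ∧
      (∀ u : U, M u ∈ T u) := by
  classical
  set f : (U → V) → ℝ := fun M => ∑ u, w u (M u) with hf
  set S : Finset (U → V) := Finset.univ.filter (fun M => Function.Injective M) with hS
  have hSne : S.Nonempty := by
    obtain ⟨e⟩ := Function.Embedding.nonempty_of_card_le hUV
    exact ⟨e, by simp [hS, e.injective]⟩
  obtain ⟨M0, hM0S, hM0max⟩ := S.exists_max_image f hSne
  set P : Finset (U → V) := S.filter (fun M => ∀ N ∈ S, f N ≤ f M) with hP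
  have hPne : P.Nonempty := ⟨M0, by simp only [hP, Finset.mem_filter]; exact ⟨hM0S, hM0max⟩⟩
  set g : (U → V) → ℕ := fun M => (Finset.univ.filter (fun u => M u ∉ T u)).card with hg
  obtain ⟨M, hMP, hMmin⟩ := P.exists_min_image g hPne
  have hMS : M ∈ S := (Finset.mem_filter.mp hMP).1
  have hMinj : Function.Injective M := by
    have := (Finset.mem_filter.mp hMS).2; exact this
  have hMmax : ∀ N ∈ S, f N ≤ f M := (Finset.mem_filter.mp hMP).2
  refine ⟨M, hMinj, fun N hN => hMmax N (by simp [hS, hN]), ?_⟩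
  by_contra h
  push_neg at h
  obtain ⟨u0, hu0⟩ := h
  have himg : (Finset.univ.image M).card = Fintype.card U := by
    rw [Finset.card_image_of_injective _ hMinj, Finset.card_univ]
  have hne : ¬ T u0 ⊆ Finset.univ.image M := by
    intro hsub
    have heq := Finset.eq_of_subset_of_card_le hsub (by rw [himg, hTcard])
    have : M u0 ∈ T u0 := heq ▸ Finset.mem_image_of_mem M (Finset.mem_univ u0)
    exact hu0 this
  obtain ⟨v, hvT, hvimg⟩ := Finset.not_subset.mp hne
  set M' := Function.update M u0 v with hM'
  have hM'u0 : M' u0 = v := Function.update_self u0 v M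
  have hM'ne : ∀ a : U, a ≠ u0 → M' a = M a := fun a ha =>
    Function.update_of_ne ha v M
  have hM'inj : Function.Injective M' := by
    intro a b hab
    by_cases ha : a = u0 <;> by_cases hb : b = u0
    · rw [ha, hb]
    · exfalso; subst ha
      rw [hM'u0, hM'ne b hb] at hab
      exact hvimg (hab ▸ Finset.mem_image_of_mem M (Finset.mem_univ b))
    · exfalso; subst hb
      rw [hM'u0, hM'ne a ha] at hab
      exact hvimg (hab.symm ▸ Finset.mem_image_of_mem M (Finset.mem_univ a))
    · rw [hM'ne a ha, hM'ne b hb] at hab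
      exact hMinj hab
  have hM'S : M' ∈ S := by simp [hS, hM'inj]
  have hrest : ∑ u ∈ Finset.univ.erase u0, w u (M' u)
      = ∑ u ∈ Finset.univ.erase u0, w u (M u) :=
    Finset.sum_congr rfl fun x hx => by rw [hM'ne x (Finset.mem_erase.mp hx).1]
  have h1 : f M' = w u0 (M' u0) + ∑ u ∈ Finset.univ.erase u0, w u (M' u) :=
    (Finset.add_sum_erase _ _ (Finset.mem_univ u0)).symm
  have h2 : f M = w u0 (M u0) + ∑ u ∈ Finset.univ.erase u0, w u (M u) :=
    (Finset.add_sum_erase _ _ (Finset.mem_univ u0)).symm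
  have hwge : w u0 v ≥ w u0 (M u0) := hTop u0 v hvT (M u0) hu0
  have hle : f M ≤ f M' := by rw [h1, h2, hM'u0, hrest]; linarith
  have hM'P : M' ∈ P := by
    refine Finset.mem_filter.mpr ⟨hM'S, fun N hN => le_trans (hMmax N hN) hle⟩
  have hlt : g M' < g M := by
    apply Finset.card_lt_card
    constructor
    · intro a ha
      simp only [Finset.mem_filter, Finset.mem_univ, true_and] at ha ⊢
      by_cases haeq : a = u0
      · exfalso; subst haeq; rw [hM'u0] at ha; exact ha hvT
      · rwa [hM'ne a haeq] at ha
    · intro hsub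
      have : u0 ∈ Finset.univ.filter (fun u => M' u ∉ T u) :=
        hsub (by simp [hu0])
      simp only [Finset.mem_filter] at this
      rw [hM'u0] at this
      exact this.2 hvT
  exact absurd (hMmin M' hM'P) (not_le.mpr hlt)
end

section
/- Let U and V be finite sets with |U| ≤ |V|, and let w : U × V → ℝ be an edge-weight function. For each u ∈ U, let T(u) ⊆ V be a set of exactly |U| vertices such that for all v ∈ T(u) and v' ∈ V \ T(u), w(u,v) ≥ w(u,v'). Then the maximum of ∑_{u∈U} w(u, M(u)) over all injective maps M : U → V equals the maximum of ∑_{u∈U} w(u, M(u)) over all injective maps M : U → V satisfying M(u) ∈ T(u) for every u ∈ U. In particular, restricting each vertex u to its |U| candidate vertices T(u) incurs no loss in optimal total utility. -/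
open Finset Function

lemma candidate_key
    {U V : Type*} [Fintype U] [Fintype V] [DecidableEq U] [DecidableEq V]
    (w : U → V → ℝ) (T : U → Finset V)
    (hTcard : ∀ u : U, (T u).card = Fintype.card U)
    (hTop : ∀ u : U, ∀ v ∈ T u, ∀ v' ∉ T u, w u v ≥ w u v') :
    ∀ n (M : U → V), Function.Injective M →
      (Finset.univ.filter (fun u => M u ∉ T u)).card ≤ n →
      ∃ M' : U → V, Function.Injective M' ∧ (∀ u, M' u ∈ T u) ∧
        ∑ u, w u (M u) ≤ ∑ u, w u (M' u) := by
  intro n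
  induction n with
  | zero =>
    intro M hM hcard
    refine ⟨M, hM, ?_, le_rfl⟩
    intro u
    by_contra h
    have : u ∈ Finset.univ.filter (fun u => M u ∉ T u) := by simp [h]
    have := Finset.card_pos.mpr ⟨u, this⟩
    omega
  | succ n ih =>
    intro M hM hcard
    by_cases hall : ∀ u, M u ∈ T u
    · exact ⟨M, hM, hall, le_rfl⟩
    push_neg at hall
    obtain ⟨u₀, hu₀⟩ := hall
    -- find v ∈ T u₀ not in range of M
    have himg : (Finset.univ.image M).card = Fintype.card U := by
      rw [Finset.card_image_of_injective _ hM, Finset.card_univ]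
    have hex : ∃ v ∈ T u₀, v ∉ Finset.univ.image M := by
      by_contra h
      push_neg at h
      have hsub : T u₀ ⊆ Finset.univ.image M := h
      have heq : T u₀ = Finset.univ.image M :=
        Finset.eq_of_subset_of_card_le hsub (by rw [himg, hTcard])
      have : M u₀ ∈ T u₀ := by
        rw [heq]; exact Finset.mem_image_of_mem M (Finset.mem_univ u₀)
      exact hu₀ this
    obtain ⟨v, hvT, hvimg⟩ := hex
    set M' := Function.update M u₀ v with hM'def
    have hM'inj : Function.Injective M' := by
      intro a b hab
      rw [hM'def] at hab
      by_cases ha : a = u₀ <;> by_cases hb : b = u₀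
      · rw [ha, hb]
      · exfalso; subst ha
        rw [Function.update_self, Function.update_of_ne hb] at hab
        exact hvimg (hab ▸ Finset.mem_image_of_mem M (Finset.mem_univ b))
      · exfalso; subst hb
        rw [Function.update_self, Function.update_of_ne ha] at hab
        exact hvimg (hab ▸ Finset.mem_image_of_mem M (Finset.mem_univ a))
      · rw [Function.update_of_ne ha, Function.update_of_ne hb] at hab
        exact hM hab
    have hsub : (Finset.univ.filter (fun u => M' u ∉ T u)) ⊆
        (Finset.univ.filter (fun u => M u ∉ T u)).erase u₀ := by
      intro a ha
      simp only [Finset.mem_filter, Finset.mem_univ, true_and] at ha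
      by_cases hau : a = u₀
      · exfalso; subst hau; rw [hM'def, Function.update_self] at ha; exact ha hvT
      · rw [hM'def, Function.update_of_ne hau] at ha
        exact Finset.mem_erase.mpr ⟨hau, by simp [ha]⟩
    have hu₀mem : u₀ ∈ Finset.univ.filter (fun u => M u ∉ T u) := by simp [hu₀]
    have hcard' : (Finset.univ.filter (fun u => M' u ∉ T u)).card ≤ n := by
      have h1 := Finset.card_le_card hsub
      have h2 := Finset.card_erase_of_mem hu₀mem
      omega
    obtain ⟨M'', h1, h2, h3⟩ := ih M' hM'inj hcard'
    refine ⟨M'', h1, h2, le_trans ?_ h3⟩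
    have hgg : (fun a => w a (M' a)) = Function.update (fun a => w a (M a)) u₀ (w u₀ v) := by
      funext a
      by_cases h : a = u₀
      · subst h; simp [hM'def]
      · simp [hM'def, Function.update_of_ne h]
    have e1 : ∑ u, w u (M' u) = w u₀ v + ∑ x ∈ Finset.univ.erase u₀, w x (M x) := by
      calc ∑ u, w u (M' u) = ∑ u, Function.update (fun a => w a (M a)) u₀ (w u₀ v) u := by
            rw [← hgg]
        _ = _ := by
            rw [Finset.sum_update_of_mem (Finset.mem_univ u₀),
              Finset.sdiff_singleton_eq_erase]
    have e2 : ∑ u, w u (M u) = w u₀ (M u₀) + ∑ x ∈ Finset.univ.erase u₀, w x (M x) :=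
      (Finset.add_sum_erase _ _ (Finset.mem_univ u₀)).symm
    have := hTop u₀ v hvT (M u₀) hu₀
    rw [e1, e2]
    linarith

/-- **Corollary 1 of the paper** (correctness of candidate broker selection).
Restricting each vertex `u` to its `|U|` candidate vertices `T u` (each of whose
weights to `u` dominates the weight of every vertex outside `T u`) incurs no loss:
the maximum total utility over all injective maps `U → V` equals the maximum over
injective maps additionally satisfying `M u ∈ T u` for every `u`. -/
theorem candidate_selection_no_utility_loss
    {U V : Type*} [Fintype U] [Fintype V] [DecidableEq V]
    (hUV : Fintype.card U ≤ Fintype.card V)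
    (w : U → V → ℝ) (T : U → Finset V)
    (hTcard : ∀ u : U, (T u).card = Fintype.card U)
    (hTop : ∀ u : U, ∀ v ∈ T u, ∀ v' ∉ T u, w u v ≥ w u v') :
    sSup {s : ℝ | ∃ M : U → V, Function.Injective M ∧ s = ∑ u, w u (M u)} =
      sSup {s : ℝ | ∃ M : U → V, Function.Injective M ∧
        (∀ u : U, M u ∈ T u) ∧ s = ∑ u, w u (M u)} := by
  classical
  set A := {s : ℝ | ∃ M : U → V, Function.Injective M ∧ s = ∑ u, w u (M u)}
  set B := {s : ℝ | ∃ M : U → V, Function.Injective M ∧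
      (∀ u : U, M u ∈ T u) ∧ s = ∑ u, w u (M u)}
  have key : ∀ M : U → V, Function.Injective M →
      ∃ M' : U → V, Function.Injective M' ∧ (∀ u, M' u ∈ T u) ∧
        ∑ u, w u (M u) ≤ ∑ u, w u (M' u) :=
    fun M hM => candidate_key w T hTcard hTop _ M hM le_rfl
  have hBA : B ⊆ A := fun s ⟨M, h1, _, h3⟩ => ⟨M, h1, h3⟩
  -- nonempty
  obtain ⟨f⟩ := Function.Embedding.nonempty_of_card_le hUV
  have hAne : A.Nonempty := ⟨_, f, f.injective, rfl⟩
  obtain ⟨M', hM'1, hM'2, _⟩ := key f f.injective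
  have hBne : B.Nonempty := ⟨_, M', hM'1, hM'2, rfl⟩
  -- bdd above
  have hfin : A.Finite := by
    have : A ⊆ Set.range (fun M : U → V => ∑ u, w u (M u)) := by
      rintro s ⟨M, _, rfl⟩; exact ⟨M, rfl⟩
    exact (Set.finite_range _).subset this
  have hAbdd : BddAbove A := hfin.bddAbove
  have hBbdd : BddAbove B := hAbdd.mono hBA
  apply le_antisymm
  · apply csSup_le hAne
    rintro s ⟨M, hMinj, rfl⟩
    obtain ⟨M', h1, h2, h3⟩ := key M hMinj
    exact le_trans h3 (le_csSup hBbdd ⟨M', h1, h2, rfl⟩)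
  · exact csSup_le_csSup hAbdd hBne hBA
end
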